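/- For all integers n ≥ 1 and 0 ≤ k ≤ n, the following identity holds in ℤ[q]: f(n+k, n-1 | q) = Σ_{j=0}^{k} f(n+j, n-j-1 | q) · q^{(n-j-1)(k-j)+j} · [k choose j]_q. -/
import Mathlib


open Polynomial Finset

/-- The indeterminate `q`, as an element of the field of rational functions `ℚ(q)`. -/
noncomputable def qq : RatFunc ℚ := RatFunc.X

/-- The Carlitz–Riordan `q`-ballot numbers `f(n,k|q) ∈ ℤ[q]`:
`f(0,0|q) = 1`, `f(n,k|q) = 0` for `k > n`, and
`f(n,k|q) = q·f(n,k-1|q) + q^k·f(n-1,k|q)` for `n ≥ k ≥ 0`, `(n,k) ≠ (0,0)`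
(with `f(n,-1|q) = 0`, so `f(n,0|q) = f(n-1,0|q)`). -/
noncomputable def fq : ℕ → ℕ → Polynomial ℤ
  | 0, 0 => 1
  | 0, _ + 1 => 0
  | n + 1, 0 => fq n 0
  | n + 1, k + 1 =>
    if k + 1 ≤ n + 1 then
      Polynomial.X * fq (n + 1) k + Polynomial.X ^ (k + 1) * fq n (k + 1)
    else 0
  termination_by n k => (n, k)

/-- The `q`-ballot numbers with second argument in `ℤ`: `f(n,k|q) = 0` for `k < 0`. -/
noncomputable def fz (n : ℕ) (k : ℤ) : Polynomial ℤ := if 0 ≤ k then fq n k.toNat else 0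

/-- The `q`-shifted factorial `(q;q)_m = (1-q)(1-q²)⋯(1-q^m)` in `ℚ(q)`. -/
noncomputable def qpoch (m : ℕ) : RatFunc ℚ := ∏ i ∈ Finset.range m, (1 - qq ^ (i + 1))

/-- The Gaussian binomial coefficient `[k choose j]_q = (q;q)_k/((q;q)_j (q;q)_{k-j})`. -/
noncomputable def gauss (k j : ℕ) : RatFunc ℚ := qpoch k / (qpoch j * qpoch (k - j))

lemma qq_ne : qq ≠ 0 := RatFunc.X_ne_zero

lemma one_sub_pow_ne (i : ℕ) : (1 : RatFunc ℚ) - qq ^ (i+1) ≠ 0 := by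
  have h : (1 : RatFunc ℚ) - qq ^ (i+1)
      = algebraMap (Polynomial ℚ) (RatFunc ℚ) (1 - Polynomial.X ^ (i+1)) := by
    rw [map_sub, map_one, map_pow, RatFunc.algebraMap_X]; rfl
  rw [h]
  simp only [ne_eq, map_eq_zero_iff _ (RatFunc.algebraMap_injective ℚ)]
  intro hc
  have := congrArg Polynomial.natDegree (sub_eq_zero.mp hc).symm
  simp [Polynomial.natDegree_X_pow] at this

lemma qpoch_ne (m : ℕ) : qpoch m ≠ 0 :=
  Finset.prod_ne_zero_iff.mpr fun i _ => one_sub_pow_ne i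

lemma qpoch_zero : qpoch 0 = 1 := Finset.prod_range_zero _

lemma qpoch_succ (m : ℕ) : qpoch (m+1) = qpoch m * (1 - qq ^ (m+1)) :=
  Finset.prod_range_succ _ _

lemma gauss_zero (k : ℕ) : gauss k 0 = 1 := by
  simp [gauss, qpoch_zero, div_self (qpoch_ne k)]

lemma gauss_self (k : ℕ) : gauss k k = 1 := by
  simp [gauss, qpoch_zero, div_self (qpoch_ne k)]

lemma pascal (j i : ℕ) :
    gauss (j+i+2) (j+1) = gauss (j+i+1) (j+1) + qq^(i+1) * gauss (j+i+1) j := by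
  have e1 : j+i+2-(j+1) = i+1 := by omega
  have e2 : j+i+1-(j+1) = i := by omega
  have e3 : j+i+1-j = i+1 := by omega
  rw [gauss, gauss, gauss, e1, e2, e3]
  rw [show j+i+2 = (j+i+1)+1 from rfl, qpoch_succ (j+i+1), qpoch_succ j, qpoch_succ i]
  have h1 := qpoch_ne j
  have h2 := qpoch_ne i
  have h3 := one_sub_pow_ne j
  have h4 := one_sub_pow_ne i
  have h5 := one_sub_pow_ne (j+i+1)
  field_simp
  ring

noncomputable def F (n : ℕ) (c : ℤ) : RatFunc ℚ := Polynomial.aeval qq (fz n c)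

lemma F_neg (n : ℕ) (c : ℤ) (h : c < 0) : F n c = 0 := by
  simp [F, fz, not_le.mpr h]

lemma F_nat (n : ℕ) (c : ℕ) : F n (c:ℤ) = Polynomial.aeval qq (fq n c) := by
  simp [F, fz]

lemma F_zero (n : ℕ) : F n 0 = Polynomial.aeval qq (fq n 0) := by
  simp [F, fz]

lemma zpow_combine (a b : ℤ) : qq ^ a * qq ^ b = qq ^ (a+b) := (zpow_add₀ qq_ne a b).symm

lemma aux1 (x g : RatFunc ℚ) (a b : ℤ) : x * qq^a * (qq^b * g) = qq^(a+b) * (x * g) := by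
  rw [← zpow_combine]; ring

lemma aux2 (x g : RatFunc ℚ) (a : ℤ) : qq * x * qq^a * g = qq^(1+a) * (x * g) := by
  rw [← zpow_combine, zpow_one]; ring

lemma aux3 (x g : RatFunc ℚ) (a b : ℤ) : qq^a * x * qq^b * g = qq^(a+b) * (x * g) := by
  rw [← zpow_combine]; ring

lemma aux4 (x g : RatFunc ℚ) (a : ℤ) : x * qq^a * g = qq^a * (x * g) := by ring

lemma Frec (a : ℕ) (b : ℤ) (hb : b ≤ (a:ℤ) + 1) :
    F (a+1) b = qq * F (a+1) (b-1) + qq^b * F a b := by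
  rcases lt_trichotomy b 0 with h|h|h
  · rw [F_neg _ _ h, F_neg _ _ (by omega : b - 1 < 0), F_neg a _ h]; ring
  · subst h
    rw [F_zero, F_zero, F_neg _ _ (by norm_num : (0:ℤ)-1 < 0), zpow_zero, fq]
    ring
  · obtain ⟨t, rfl⟩ : ∃ t : ℕ, b = (t:ℤ)+1 := ⟨(b-1).toNat, by omega⟩
    have ht : t + 1 ≤ a + 1 := by omega
    have e1 : F (a+1) ((t:ℤ)+1) = Polynomial.aeval qq (fq (a+1) (t+1)) := by
      rw [show ((t:ℤ)+1) = ((t+1:ℕ):ℤ) by push_cast; ring, F_nat]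
    have e2 : F (a+1) ((t:ℤ)+1-1) = Polynomial.aeval qq (fq (a+1) t) := by
      rw [show ((t:ℤ)+1-1) = ((t:ℕ):ℤ) by push_cast; ring, F_nat]
    have e3 : F a ((t:ℤ)+1) = Polynomial.aeval qq (fq a (t+1)) := by
      rw [show ((t:ℤ)+1) = ((t+1:ℕ):ℤ) by push_cast; ring, F_nat]
    rw [e1, e2, e3, fq, if_pos ht, map_add, map_mul, map_mul, map_pow, aeval_X,
      show ((t:ℤ)+1) = ((t+1:ℕ):ℤ) by push_cast; ring, zpow_natCast]

lemma sum_shift (f u v : ℕ → RatFunc ℚ) (k : ℕ)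
    (h0 : f 0 = v 0) (hk : f (k+1) = u k)
    (hj : ∀ j ∈ Finset.range k, f (j+1) = u j + v (j+1)) :
    ∑ j ∈ Finset.range (k+2), f j = ∑ j ∈ Finset.range (k+1), (u j + v j) := by
  rw [Finset.sum_range_succ' f (k+1), Finset.sum_add_distrib,
    Finset.sum_range_succ (fun j => u j), Finset.sum_range_succ' v k,
    Finset.sum_range_succ (fun j => f (j+1)), Finset.sum_congr rfl hj,
    Finset.sum_add_distrib, h0, hk]
  ring

lemma main (c : ℤ) : ∀ k m : ℕ, 1 ≤ m → c ≤ (m:ℤ) →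
    F (m+k) c = ∑ j ∈ Finset.range (k+1),
      F (m+j) (c-(j:ℤ)) * qq ^ ((c-(j:ℤ))*((k:ℤ)-(j:ℤ))+(j:ℤ)) * gauss k j := by
  intro k
  induction k with
  | zero =>
    intro m hm hc
    simp [gauss_zero]
  | succ k ih =>
    intro m hm hc
    have hstep : ∀ j ∈ Finset.range (k+1),
        F (m+1+j) (c-(j:ℤ)) * qq ^ ((c-(j:ℤ))*((k:ℤ)-(j:ℤ))+(j:ℤ)) * gauss k j
        = (qq * F (m+(j+1)) (c-((j:ℤ)+1)) * qq ^ ((c-(j:ℤ))*((k:ℤ)-(j:ℤ))+(j:ℤ)) * gauss k j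
          + qq^(c-(j:ℤ)) * F (m+j) (c-(j:ℤ)) * qq ^ ((c-(j:ℤ))*((k:ℤ)-(j:ℤ))+(j:ℤ)) * gauss k j) := by
      intro j hj
      have ha : m+1+j = (m+j)+1 := by omega
      have hb : m+(j+1) = (m+j)+1 := by omega
      have hc2 : c-((j:ℤ)+1) = (c-(j:ℤ))-1 := by ring
      have hfr : c - (j:ℤ) ≤ ((m+j:ℕ):ℤ) + 1 := by push_cast; omega
      rw [ha, hb, hc2, Frec (m+j) (c-(j:ℤ)) hfr]
      ring
    have hm1 : c ≤ ((m+1:ℕ):ℤ) := by push_cast; omega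
    rw [show m + (k+1) = (m+1) + k by omega, ih (m+1) (by omega) hm1,
      Finset.sum_congr rfl hstep]
    push_cast
    refine (sum_shift _ _ _ k ?_ ?_ ?_).symm
    · -- f 0 = v 0
      simp only [Nat.cast_zero, sub_zero, add_zero, Nat.add_zero, gauss_zero, mul_one]
      rw [show c*((k:ℤ)+1) = (c-(0:ℤ))+c*(k:ℤ) by ring, ← zpow_combine]
      ring
    · -- f (k+1) = u k
      rw [gauss_self, gauss_self]
      push_cast
      rw [show (c-((k:ℤ)+1))*((k:ℤ)+1-((k:ℤ)+1))+((k:ℤ)+1) = 1 + ((c-(k:ℤ))*((k:ℤ)-(k:ℤ))+(k:ℤ)) by ring,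
        ← zpow_combine, zpow_one]
      ring
    · -- middle terms
      intro j hj
      have hjk : j < k := Finset.mem_range.mp hj
      obtain ⟨i, rfl⟩ : ∃ i, k = j + i + 1 := ⟨k - j - 1, by omega⟩
      push_cast
      rw [show j+i+1+1 = j+i+2 by omega, pascal j i]
      rw [show (qq:RatFunc ℚ)^(i+1) = qq^(((i:ℤ))+1) by rw [← zpow_natCast]; norm_cast]
      rw [mul_add, add_comm]
      congr 1
      · rw [aux1, aux2]
        congr 1
        ring
      · rw [aux4, aux3]
        congr 1
        ring

/-- For `n ≥ 1` and `0 ≤ k ≤ n`: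
`f(n+k, n-1|q) = Σ_{j=0}^{k} f(n+j, n-j-1|q) q^{(n-j-1)(k-j)+j} [k choose j]_q`
(the identity in `ℤ[q]`, viewed inside `ℚ(q)`; note `f(2n, -1|q) = 0` when `j = k = n`). -/
theorem statement13 (n : ℕ) (hn : 1 ≤ n) (k : ℕ) (hkn : k ≤ n) :
    Polynomial.aeval qq (fq (n + k) (n - 1)) =
      ∑ j ∈ Finset.range (k + 1),
        Polynomial.aeval qq (fz (n + j) ((n : ℤ) - j - 1)) *
          qq ^ (((n : ℤ) - j - 1) * ((k : ℤ) - j) + j) * gauss k j := by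
  have h := main ((n:ℤ)-1) k n hn (by omega)
  have hl : Polynomial.aeval qq (fq (n+k) (n-1)) = F (n+k) ((n:ℤ)-1) := by
    rw [F, fz, if_pos (by omega : (0:ℤ) ≤ (n:ℤ)-1)]
    congr 2
    omega
  rw [hl, h]
  refine Finset.sum_congr rfl fun j hj => ?_
  rw [show (n:ℤ)-1-(j:ℤ) = (n:ℤ)-(j:ℤ)-1 by ring]
  rfl
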